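/- For positive semidefinite matrices M ⪯ N in ℝ^{d×d} and vector a ∈ ℝ^d with a in the image of M, appending the rank-one matrix a a^T preserves the ordering of quadratic forms of pseudoinverses: a^T (N + a a^T)^+ a ≤ a^T (M + a a^T)^+ a. -/

import Mathlib

open Matrix

/-!
For `b = A w` the pseudoinverse form is variational: `bᵀA⁺b = wᵀAw = max_x (2 bᵀx - xᵀAx)`,
the maximum being attained at `x = w` because `(w - x)ᵀA(w - x) ≥ 0`; for symmetric `B` it is
attained at `x = B⁺b` since `B⁺BB⁺ = B⁺`. Increasing `A` to `B` lowers every `2 bᵀx - xᵀAx`,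
hence lowers the maximum. Here `A = M + a aᵀ` and `B = N + a aᵀ`, and `a = M y` lies in the image
of `M + a aᵀ` as `(M + a aᵀ) y = (1 + aᵀy) a` with `aᵀy = yᵀMy ≥ 0`.
-/

/-- `B` is the Moore–Penrose pseudoinverse of `A`. -/
def IsMoorePenrose {n d : Type*} [Fintype n] [Fintype d]
    (A : Matrix n d ℝ) (B : Matrix d n ℝ) : Prop :=
  A * B * A = A ∧ B * A * B = B ∧ (A * B)ᵀ = A * B ∧ (B * A)ᵀ = B * A

namespace Matrix

variable {n : Type*} [Fintype n]

theorem PosSemidef.two_mul_dotProduct_sub_le {A P : Matrix n n ℝ} (hA : A.PosSemidef)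
    (hP : A * P * A = A) (w x : n → ℝ) :
    2 * ((A *ᵥ w) ⬝ᵥ x) - x ⬝ᵥ (A *ᵥ x) ≤ (A *ᵥ w) ⬝ᵥ (P *ᵥ (A *ᵥ w)) := by
  have hA_symm : Aᵀ = A := (isHermitian_iff_isSymm.mp hA.isHermitian).eq
  have hP_form : (A *ᵥ w) ⬝ᵥ (P *ᵥ (A *ᵥ w)) = w ⬝ᵥ (A *ᵥ w) := by
    rw [dotProduct_comm, ← dotProduct_transpose_mulVec, hA_symm, mulVec_mulVec, mulVec_mulVec, hP]
  have h_cross : x ⬝ᵥ (A *ᵥ w) = w ⬝ᵥ (A *ᵥ x) := by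
    rw [← dotProduct_transpose_mulVec, hA_symm]
  have h_nonneg : 0 ≤ (w - x) ⬝ᵥ (A *ᵥ (w - x)) := by
    simpa using hA.dotProduct_mulVec_nonneg (w - x)
  simp only [mulVec_sub, dotProduct_sub, sub_dotProduct] at h_nonneg
  rw [hP_form, dotProduct_comm]
  linarith

theorem PosSemidef.exists_add_vecMulVec_self_mulVec_eq {M : Matrix n n ℝ} (hM : M.PosSemidef)
    {a : n → ℝ} (ha : ∃ y, M *ᵥ y = a) : ∃ w, (M + vecMulVec a a) *ᵥ w = a := by
  obtain ⟨y, hy⟩ := ha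
  have hc : 0 < 1 + a ⬝ᵥ y := by
    have : 0 ≤ y ⬝ᵥ (M *ᵥ y) := by simpa using hM.dotProduct_mulVec_nonneg y
    rw [hy, dotProduct_comm] at this
    linarith
  refine ⟨(1 + a ⬝ᵥ y)⁻¹ • y, ?_⟩
  calc (M + vecMulVec a a) *ᵥ ((1 + a ⬝ᵥ y)⁻¹ • y) = (1 + a ⬝ᵥ y)⁻¹ • ((1 + a ⬝ᵥ y) • a) := by
        rw [mulVec_smul, add_mulVec, hy, vecMulVec_mulVec, op_smul_eq_smul, add_smul, one_smul]
    _ = a := by rw [smul_smul, inv_mul_cancel₀ hc.ne', one_smul]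

end Matrix

namespace IsMoorePenrose

variable {m n : Type*} [Fintype m] [Fintype n] {A : Matrix m n ℝ} {B C : Matrix n m ℝ}

theorem unique (hB : IsMoorePenrose A B) (hC : IsMoorePenrose A C) : B = C := by
  obtain ⟨hB₁, hB₂, hB₃, hB₄⟩ := hB
  obtain ⟨hC₁, hC₂, hC₃, hC₄⟩ := hC
  have hAB : A * B = A * C :=
    calc A * B = (A * C)ᵀ * (A * B)ᵀ := by rw [hC₃, hB₃, ← Matrix.mul_assoc, hC₁]
      _ = A * C := by rw [← transpose_mul, ← Matrix.mul_assoc, hB₁, hC₃]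
  have hBA : B * A = C * A :=
    calc B * A = (B * A)ᵀ * (C * A)ᵀ := by
          rw [hB₄, hC₄, Matrix.mul_assoc, ← Matrix.mul_assoc A, hC₁]
      _ = C * A := by rw [← transpose_mul, Matrix.mul_assoc, ← Matrix.mul_assoc A, hB₁, hC₄]
  calc B = B * A * B := hB₂.symm
    _ = C * A * C := by rw [hBA, Matrix.mul_assoc, hAB, ← Matrix.mul_assoc]
    _ = C := hC₂

theorem transpose (hB : IsMoorePenrose A B) : IsMoorePenrose Aᵀ Bᵀ := by
  obtain ⟨h₁, h₂, h₃, h₄⟩ := hB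
  refine ⟨?_, ?_, ?_, ?_⟩
  · rw [← transpose_mul, ← transpose_mul, ← Matrix.mul_assoc, h₁]
  · rw [← transpose_mul, ← transpose_mul, ← Matrix.mul_assoc, h₂]
  · rw [← transpose_mul, transpose_transpose, h₄]
  · rw [← transpose_mul, transpose_transpose, h₃]

theorem isSymm {A B : Matrix n n ℝ} (hA : A.IsSymm) (hB : IsMoorePenrose A B) : B.IsSymm :=
  (hA.eq ▸ hB.transpose).unique hB

theorem dotProduct_mulVec_le_of_posSemidef_sub {A B P Q : Matrix n n ℝ}
    (hA : A.PosSemidef) (hAB : (B - A).PosSemidef) (hP : IsMoorePenrose A P)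
    (hQ : IsMoorePenrose B Q) {b : n → ℝ} (hb : ∃ w, A *ᵥ w = b) :
    b ⬝ᵥ (Q *ᵥ b) ≤ b ⬝ᵥ (P *ᵥ b) := by
  obtain ⟨w, rfl⟩ := hb
  set x := Q *ᵥ (A *ᵥ w)
  have hB : B.IsSymm := by simpa using (hA.add hAB).isHermitian
  have hQ_symm : Qᵀ = Q := (hQ.isSymm hB).eq
  have hQ_form : x ⬝ᵥ (B *ᵥ x) = (A *ᵥ w) ⬝ᵥ x := by
    rw [dotProduct_comm, ← dotProduct_transpose_mulVec, hQ_symm, mulVec_mulVec, mulVec_mulVec,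
      hQ.2.1]
  have hAB_form : x ⬝ᵥ (A *ᵥ x) ≤ x ⬝ᵥ (B *ᵥ x) := by
    have := hAB.dotProduct_mulVec_nonneg x
    simp only [star_trivial, sub_mulVec, dotProduct_sub] at this
    linarith
  linarith [hA.two_mul_dotProduct_sub_le hP.1 w x]

end IsMoorePenrose

theorem pinv_quadratic_rank_one_update_general {d : ℕ} (M N : Matrix (Fin d) (Fin d) ℝ)
    (hM : M.PosSemidef) (hMN : (N - M).PosSemidef)
    (a : Fin d → ℝ) (ha : ∃ y : Fin d → ℝ, M *ᵥ y = a)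
    (P Q : Matrix (Fin d) (Fin d) ℝ)
    (hP : IsMoorePenrose (M + vecMulVec a a) P)
    (hQ : IsMoorePenrose (N + vecMulVec a a) Q) :
    a ⬝ᵥ (Q *ᵥ a) ≤ a ⬝ᵥ (P *ᵥ a) := by
  have haa : (vecMulVec a a).PosSemidef := by simpa using posSemidef_vecMulVec_self_star a
  have hMN' : (N + vecMulVec a a - (M + vecMulVec a a)).PosSemidef := by
    rwa [add_sub_add_right_eq_sub]
  exact IsMoorePenrose.dotProduct_mulVec_le_of_posSemidef_sub (hM.add haa) hMN' hP hQ
    (hM.exists_add_vecMulVec_self_mulVec_eq ha)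

/-- For PSD matrices `M ⪯ N` and `a ∈ Im M`, appending the rank-one matrix `a aᵀ` preserves
the ordering of pseudoinverse quadratic forms: `aᵀ(N + a aᵀ)⁺a ≤ aᵀ(M + a aᵀ)⁺a`. -/
theorem pinv_quadratic_rank_one_update {d : ℕ} (M N : Matrix (Fin d) (Fin d) ℝ)
    (hM : M.PosSemidef) (hN : N.PosSemidef) (hMN : (N - M).PosSemidef)
    (a : Fin d → ℝ) (ha : ∃ y : Fin d → ℝ, M *ᵥ y = a)
    (P Q : Matrix (Fin d) (Fin d) ℝ)
    (hP : IsMoorePenrose (M + vecMulVec a a) P)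
    (hQ : IsMoorePenrose (N + vecMulVec a a) Q) :
    a ⬝ᵥ (Q *ᵥ a) ≤ a ⬝ᵥ (P *ᵥ a) :=
  pinv_quadratic_rank_one_update_general M N hM hMN a ha P Q hP hQ
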